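/- arXiv:1910.07698 — 5 statements merged into one kernel-verified Lean document; each statement's English description precedes it below -/
import Mathlib

section
/- For a > 0, the sequence p_k := (a+1) · a^(k-1) / (2a+1)^(k) (rising factorials) satisfies the tail identity: for all k ≥ 2, the tail sum p_{>k-1} := Σ_{j≥k} p_j equals ((k + 2a)/(a+1)) · p_k. -/
open scoped BigOperators

/-- Rising factorial `x^(n) = x(x+1)...(x+n-1)`. -/
noncomputable def risingFac (x : ℝ) (n : ℕ) : ℝ := ∏ i ∈ Finset.range n, (x + i)

/-- Limiting degree frequencies of the Buckley-Osthus model. -/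
noncomputable def BOp (a : ℝ) (k : ℕ) : ℝ :=
  (a + 1) * risingFac a (k - 1) / risingFac (2 * a + 1) k

/-- Tail sum `p_{>m}`. -/
noncomputable def BOtail (a : ℝ) (m : ℕ) : ℝ := ∑' j : ℕ, BOp a (m + 1 + j)

open Filter Topology

lemma risingFac_pos {x : ℝ} (hx : 0 < x) (n : ℕ) : 0 < risingFac x n := by
  apply Finset.prod_pos; intro i _; positivity

lemma risingFac_succ (x : ℝ) (n : ℕ) : risingFac x (n+1) = risingFac x n * (x + n) :=
  Finset.prod_range_succ _ _

noncomputable def BOT (a : ℝ) (m : ℕ) : ℝ := (((m:ℝ) + 2*a)/(a+1)) * BOp a m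

lemma BOT_step (a : ℝ) (ha : 0 < a) (m : ℕ) :
    BOT a (m+2) = BOp a (m+2) + BOT a (m+3) := by
  have h1 := risingFac_pos ha (m+1)
  have h2 := risingFac_pos (x := 2*a+1) (by linarith) (m+2)
  simp only [BOT, BOp]
  have e1 : (m+2) - 1 = m + 1 := rfl
  have e2 : (m+3) - 1 = m + 2 := rfl
  rw [e1, e2, risingFac_succ a (m+1), risingFac_succ (2*a+1) (m+2)]
  push_cast
  have hne : (2*a+1) + ((m:ℝ)+2) ≠ 0 := by positivity
  field_simp
  ring

lemma BOT_ratio (a : ℝ) (ha : 0 < a) (m : ℕ) :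
    BOT a (m+3) = BOT a (m+2) * ((a+m+1)/(2*a+m+2)) := by
  have h1 := risingFac_pos ha (m+1)
  have h2 := risingFac_pos (x := 2*a+1) (by linarith) (m+2)
  simp only [BOT, BOp]
  have e1 : (m+2) - 1 = m + 1 := rfl
  have e2 : (m+3) - 1 = m + 2 := rfl
  rw [e1, e2, risingFac_succ a (m+1), risingFac_succ (2*a+1) (m+2)]
  push_cast
  field_simp
  ring

open scoped BigOperators
open Filter Topology

lemma BOp_pos (a : ℝ) (ha : 0 < a) (m : ℕ) : 0 < BOp a m := by
  have h1 := risingFac_pos ha (m-1)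
  have h2 := risingFac_pos (x := 2*a+1) (by linarith) m
  unfold BOp; positivity

lemma BOT_pos (a : ℝ) (ha : 0 < a) (m : ℕ) : 0 < BOT a m := by
  have := BOp_pos a ha m
  unfold BOT
  have : (0:ℝ) < (m:ℝ) + 2*a := by positivity
  positivity

lemma BOT_bound (a : ℝ) (ha : 0 < a) (m : ℕ) : BOT a (m+2) ≤ 1/((m:ℝ)+1) := by
  induction m with
  | zero =>
    have h2 := risingFac_pos (x := 2*a+1) (by linarith) 2
    simp only [BOT, BOp]
    norm_num [risingFac, Finset.prod_range_succ]
    rw [div_mul_div_comm, div_le_one (by positivity)]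
    nlinarith [mul_pos ha ha, sq_nonneg (a+1), mul_nonneg (mul_nonneg ha.le ha.le) ha.le]
  | succ n ih =>
    have h3 : ((n:ℕ)+1+2 : ℕ) = n + 3 := by ring
    rw [h3, BOT_ratio a ha n]
    have hpos : (0:ℝ) < 2*a + n + 2 := by positivity
    have hr : (a+(n:ℝ)+1)/(2*a+(n:ℝ)+2) ≤ ((n:ℝ)+1)/((n:ℝ)+2) := by
      rw [div_le_div_iff₀ hpos (by positivity)]
      nlinarith [ha.le, Nat.cast_nonneg (α := ℝ) n]
    calc BOT a (n+2) * ((a+(n:ℝ)+1)/(2*a+(n:ℝ)+2))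
        ≤ (1/((n:ℝ)+1)) * (((n:ℝ)+1)/((n:ℝ)+2)) := by
          apply mul_le_mul ih hr (by positivity) (by positivity)
      _ = 1/(((n:ℕ)+1 : ℕ)+1 : ℝ) := by push_cast; field_simp; ring

lemma BOT_partial (a : ℝ) (ha : 0 < a) (k : ℕ) (hk : 2 ≤ k) (n : ℕ) :
    ∑ j ∈ Finset.range n, BOp a (k+j) = BOT a k - BOT a (k+n) := by
  induction n with
  | zero => simp
  | succ n ih =>
    rw [Finset.sum_range_succ, ih]
    obtain ⟨m, hm⟩ : ∃ m, k + n = m + 2 := ⟨k + n - 2, by omega⟩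
    have hm' : k + (n+1) = m + 3 := by omega
    rw [hm, hm', BOT_step a ha m]
    ring

lemma BOT_tendsto (a : ℝ) (ha : 0 < a) (k : ℕ) (hk : 2 ≤ k) :
    Tendsto (fun n => BOT a (k+n)) atTop (𝓝 0) := by
  apply squeeze_zero (g := fun (n:ℕ) => 1/((n:ℝ)+1)) (fun (n:ℕ) => (BOT_pos a ha (k+n)).le)
  · intro n
    obtain ⟨m, hm⟩ : ∃ m, k + n = m + 2 := ⟨k + n - 2, by omega⟩
    rw [hm]
    refine le_trans (BOT_bound a ha m) ?_
    apply one_div_le_one_div_of_le (by positivity)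
    have : n ≤ m := by omega
    have := Nat.cast_le (α := ℝ).mpr this
    linarith
  · exact tendsto_one_div_add_atTop_nhds_zero_nat

theorem bo_tail_identity (a : ℝ) (ha : 0 < a) (k : ℕ) (hk : 2 ≤ k) :
    BOtail a (k - 1) = (((k : ℝ) + 2 * a) / (a + 1)) * BOp a k := by
  have hk1 : k - 1 + 1 = k := by omega
  have hsum : HasSum (fun j => BOp a (k + j)) (BOT a k) := by
    rw [hasSum_iff_tendsto_nat_of_nonneg (fun j => (BOp_pos a ha (k+j)).le)]
    have h := (BOT_tendsto a ha k hk).const_sub (BOT a k)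
    simp only [sub_zero] at h
    refine h.congr (fun n => ?_)
    exact (BOT_partial a ha k hk n).symm
  have : BOtail a (k-1) = ∑' j : ℕ, BOp a (k + j) := by
    unfold BOtail
    congr 1
    funext j
    rw [hk1]
  rw [this, hsum.tsum_eq]
  rfl
end

section
/- Fix a_0 > 0 and let p_k := (a_0+1) · a_0^(k-1) / (2a_0+1)^(k) with tail sums p_{>m} := Σ_{j>m} p_j. Define ℓ'(a) := Σ_{k≥0} p_{>k+1}/(a+k) − 1/(a+1) for a > 0. Then ℓ'(a) = (a − a_0)/((a_0+1)(a+1)) · Σ_{k≥0} ((k−1)/(k+a)) · p_{k+1}. -/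
open scoped BigOperators

namespace BOaux
open Filter

lemma risingFac_pos {x : ℝ} (hx : 0 < x) (n : ℕ) : 0 < risingFac x n :=
  Finset.prod_pos fun i _ => by positivity

lemma risingFac_succ (x : ℝ) (n : ℕ) : risingFac x (n + 1) = risingFac x n * (x + n) :=
  Finset.prod_range_succ _ _

lemma risingFac_zero (x : ℝ) : risingFac x 0 = 1 := Finset.prod_range_zero _

noncomputable def q (a₀ : ℝ) (k : ℕ) : ℝ := risingFac a₀ k / risingFac (2 * a₀ + 1) k

variable {a₀ : ℝ} (ha₀ : 0 < a₀)
include ha₀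

lemma q_pos (k : ℕ) : 0 < q a₀ k :=
  div_pos (risingFac_pos ha₀ k) (risingFac_pos (by linarith) k)

lemma q_zero : q a₀ 0 = 1 := by simp [q, risingFac_zero]

lemma q_rec (k : ℕ) : q a₀ (k + 1) * (2 * a₀ + 1 + k) = q a₀ k * (a₀ + k) := by
  have h1 : risingFac (2 * a₀ + 1) k ≠ 0 := (risingFac_pos (by linarith) k).ne'
  have h2 : (2 * a₀ + 1 + (k : ℝ)) ≠ 0 := by positivity
  unfold q
  rw [risingFac_succ, risingFac_succ]
  field_simp

lemma q_anti (k : ℕ) : q a₀ (k + 1) ≤ q a₀ k := by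
  have h := q_rec ha₀ k
  have hb : (0:ℝ) < 2 * a₀ + 1 + k := by positivity
  have hq := (q_pos ha₀ (k + 1)).le
  nlinarith [q_pos ha₀ k]

lemma BOp_succ (k : ℕ) : BOp a₀ (k + 1) = q a₀ k - q a₀ (k + 1) := by
  have h1 : risingFac (2 * a₀ + 1) k ≠ 0 := (risingFac_pos (by linarith) k).ne'
  have h2 : (2 * a₀ + 1 + (k : ℝ)) ≠ 0 := by positivity
  unfold BOp q
  simp only [Nat.add_sub_cancel, risingFac_succ]
  field_simp
  ring

lemma diff_nonneg (k : ℕ) : 0 ≤ q a₀ k - q a₀ (k + 1) := by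
  linarith [q_anti ha₀ k]

lemma summable_diff : Summable (fun k => q a₀ k - q a₀ (k + 1)) := by
  refine summable_of_sum_range_le (c := 1) (diff_nonneg ha₀) fun n => ?_
  rw [Finset.sum_range_sub' (q a₀) n]
  have := (q_pos ha₀ n).le
  rw [q_zero ha₀]; linarith

lemma summable_q_div : Summable (fun k => q a₀ k / (2 * a₀ + 1 + k)) := by
  have h := (summable_diff ha₀).mul_left (1 / (a₀ + 1))
  refine h.congr fun k => ?_
  have h1 := q_rec ha₀ k
  have h2 : (2 * a₀ + 1 + (k : ℝ)) ≠ 0 := by positivity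
  have h3 : a₀ + 1 ≠ 0 := by positivity
  field_simp
  linarith [q_rec ha₀ k]

lemma summable_q_div' {c : ℝ} (hc : 0 < c) : Summable (fun k => q a₀ k / (c + k)) := by
  set M : ℝ := max ((2 * a₀ + 1) / c) 1 with hM
  have hM1 : (1:ℝ) ≤ M := le_max_right _ _
  have hM2 : 2 * a₀ + 1 ≤ M * c := by
    have : (2 * a₀ + 1) / c ≤ M := le_max_left _ _
    calc 2 * a₀ + 1 = ((2 * a₀ + 1) / c) * c := by field_simp
    _ ≤ M * c := by nlinarith
  have h := (summable_q_div ha₀).mul_left M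
  refine Summable.of_nonneg_of_le
    (fun k => div_nonneg (q_pos ha₀ k).le (by positivity)) (fun k => ?_) h
  have hck : (0:ℝ) < c + k := by positivity
  have hbk : (0:ℝ) < 2 * a₀ + 1 + k := by positivity
  have hq := (q_pos ha₀ k).le
  rw [mul_div_assoc', div_le_div_iff₀ hck hbk]
  have hk0 : (0:ℝ) ≤ (k:ℝ) := Nat.cast_nonneg k
  nlinarith [mul_nonneg hq (sub_nonneg.mpr hM2),
    mul_nonneg (mul_nonneg hq hk0) (sub_nonneg.mpr hM1)]

lemma q_tendsto : Tendsto (q a₀) atTop (nhds 0) := by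
  have hanti : Antitone (q a₀) := antitone_nat_of_succ_le (q_anti ha₀)
  have hbdd : BddBelow (Set.range (q a₀)) :=
    ⟨0, fun x ⟨k, hk⟩ => hk ▸ (q_pos ha₀ k).le⟩
  have htend := tendsto_atTop_ciInf hanti hbdd
  set L := ⨅ k, q a₀ k with hL
  have hL0 : 0 ≤ L := le_ciInf fun k => (q_pos ha₀ k).le
  rcases eq_or_lt_of_le hL0 with h | h
  · rwa [← h] at htend
  · exfalso
    have hb : (0:ℝ) < 2 * a₀ + 1 := by linarith
    have hsum := (summable_q_div ha₀).mul_left ((2 * a₀ + 2) / L)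
    have : Summable (fun n : ℕ => 1 / (n : ℝ)) := by
      refine Summable.of_nonneg_of_le (fun n => by positivity) (fun n => ?_) hsum
      have hq := (q_pos ha₀ n).le
      rcases Nat.eq_zero_or_pos n with rfl | hn
      · simp
        exact mul_nonneg (div_nonneg (by linarith) hL0)
          (div_nonneg hq (by positivity))
      · have hn1 : (1:ℝ) ≤ n := by exact_mod_cast hn
        have hLq : L ≤ q a₀ n := ciInf_le hbdd n
        have hbn : (0:ℝ) < 2 * a₀ + 1 + n := by positivity
        rw [div_mul_div_comm, div_le_div_iff₀ (by linarith : (0:ℝ) < (n:ℝ))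
          (mul_pos h hbn)]
        have h1 : L * (2 * a₀ + 1 + n) ≤ q a₀ n * (2 * a₀ + 1 + n) :=
          mul_le_mul_of_nonneg_right hLq hbn.le
        have h2 : q a₀ n * (2 * a₀ + 1 + n) ≤ q a₀ n * ((2 * a₀ + 2) * n) :=
          mul_le_mul_of_nonneg_left (by nlinarith) hq
        nlinarith
    exact Real.not_summable_one_div_natCast this

omit ha₀ in
/-- telescoping sum -/
lemma hasSum_teles (f : ℕ → ℝ) (hf : Summable (fun k => f k - f (k + 1)))
    (h0 : Tendsto f atTop (nhds 0)) : HasSum (fun k => f k - f (k + 1)) (f 0) := by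
  obtain ⟨s, hs⟩ := hf
  have h1 := hs.tendsto_sum_nat
  have h2 : Tendsto (fun n => ∑ i ∈ Finset.range n, (f i - f (i + 1))) atTop (nhds (f 0 - 0)) := by
    simp only [Finset.sum_range_sub' f]
    exact tendsto_const_nhds.sub h0
  have : s = f 0 := by
    have := tendsto_nhds_unique h1 h2
    simpa using this
  rwa [this] at hs

lemma hasSum_tail (m : ℕ) :
    HasSum (fun j => q a₀ (m + j) - q a₀ (m + j + 1)) (q a₀ m) := by
  have hsum : Summable (fun j => q a₀ (m + j) - q a₀ (m + j + 1)) := by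
    have := (summable_nat_add_iff (f := fun k => q a₀ k - q a₀ (k + 1)) m).mpr
      (summable_diff ha₀)
    exact this.congr fun j => by rw [Nat.add_comm j m]
  have h0 : Tendsto (fun j => q a₀ (m + j)) atTop (nhds 0) := by
    have := (q_tendsto ha₀).comp (tendsto_add_atTop_nat m)
    exact this.congr fun j => by simp [Nat.add_comm]
  exact hasSum_teles (fun j => q a₀ (m + j)) hsum h0

lemma BOtail_eq (m : ℕ) : BOtail a₀ m = q a₀ m := by
  have h := hasSum_tail ha₀ m
  rw [BOtail]
  rw [show (fun j : ℕ => BOp a₀ (m + 1 + j)) = fun j => q a₀ (m + j) - q a₀ (m + j + 1) from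
    funext fun j => by rw [show m + 1 + j = (m + j) + 1 by omega, BOp_succ ha₀]]
  exact h.tsum_eq

end BOaux

open BOaux Filter

theorem bo_score_identity (a₀ : ℝ) (ha₀ : 0 < a₀) (a : ℝ) (ha : 0 < a) :
    (∑' k : ℕ, BOtail a₀ (k + 1) / (a + k)) - 1 / (a + 1)
      = (a - a₀) / ((a₀ + 1) * (a + 1))
          * ∑' k : ℕ, (((k : ℝ) - 1) / ((k : ℝ) + a)) * BOp a₀ (k + 1) := by
  have hq := q_pos ha₀
  have hsub : ∀ c : ℝ, 0 < c → Summable (fun k : ℕ => q a₀ (k + 1) / (c + k)) := by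
    intro c hc
    refine Summable.of_nonneg_of_le (fun k => div_nonneg (hq _).le (by positivity))
      (fun k => ?_) (summable_q_div' ha₀ hc)
    have hle := q_anti ha₀ k
    gcongr
  have hS : HasSum (fun k : ℕ => q a₀ (k + 1) / (a + k))
      (∑' k : ℕ, q a₀ (k + 1) / (a + k)) := (hsub a ha).hasSum
  have hS' : HasSum (fun k : ℕ => q a₀ (k + 1) / (a + 1 + k))
      (∑' k : ℕ, q a₀ (k + 1) / (a + 1 + k)) := (hsub (a + 1) (by linarith)).hasSum
  set S := ∑' k : ℕ, q a₀ (k + 1) / (a + k) with hSdef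
  set S' := ∑' k : ℕ, q a₀ (k + 1) / (a + 1 + k) with hS'def
  have hP : HasSum (fun k : ℕ => q a₀ k - q a₀ (k + 1)) 1 := by
    have h := hasSum_tail ha₀ 0
    rw [q_zero ha₀] at h
    exact h.congr_fun fun j => by rw [Nat.zero_add]
  have hQ : HasSum (fun k : ℕ => q a₀ k / (a + k)) (S' + 1 / a) := by
    have h1 : HasSum (fun n : ℕ => q a₀ (n + 1) / (a + ((n : ℕ) + 1 : ℕ))) S' := by
      refine hS'.congr_fun fun n => ?_
      push_cast
      ring_nf
    have h2 := (hasSum_nat_add_iff (f := fun k : ℕ => q a₀ k / (a + k)) 1).mp h1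
    simpa [q_zero ha₀] using h2
  have hstar : (2 * a₀ + 1 - a) * S - (a₀ - a) * (S' + 1 / a) = 1 := by
    have hcomb := (hS.mul_left (2 * a₀ + 1 - a)).sub (hQ.mul_left (a₀ - a))
    have heq : (fun k : ℕ => (2 * a₀ + 1 - a) * (q a₀ (k + 1) / (a + k))
          - (a₀ - a) * (q a₀ k / (a + k))) = fun k => q a₀ k - q a₀ (k + 1) := by
      funext k
      have hak : a + (k : ℝ) ≠ 0 := by positivity
      have hr := q_rec ha₀ k
      field_simp
      linear_combination hr
    rw [heq] at hcomb
    exact hcomb.unique hP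
  set f : ℕ → ℝ := fun k => (((k : ℝ) - 1) / ((k : ℝ) + a)) * q a₀ k with hfdef
  have hratio : ∀ k : ℕ, |(((k : ℝ) - 1) / ((k : ℝ) + a))| ≤ 1 + 1 / a := by
    intro k
    have hk0 : (0 : ℝ) ≤ (k : ℝ) := Nat.cast_nonneg k
    have hka : (0 : ℝ) < (k : ℝ) + a := by positivity
    rw [abs_div, abs_of_pos hka, div_le_iff₀ hka]
    have h1 : |(k : ℝ) - 1| ≤ (k : ℝ) + 1 := by
      rw [abs_le]; constructor <;> nlinarith
    have h2 : (k : ℝ) + 1 ≤ (1 + 1 / a) * ((k : ℝ) + a) := by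
      have he : (1 + 1 / a) * ((k : ℝ) + a) = (k : ℝ) + a + ((k : ℝ) / a + 1) := by
        field_simp
      have hp : (0:ℝ) ≤ (k : ℝ) / a := by positivity
      rw [he]; linarith
    linarith
  have hq0 : Tendsto (fun k => (1 + 1 / a) * q a₀ k) atTop (nhds 0) := by
    simpa using (q_tendsto ha₀).const_mul (1 + 1 / a)
  have htends : Tendsto f atTop (nhds 0) := by
    refine squeeze_zero_norm (fun k => ?_) hq0
    rw [hfdef]
    rw [Real.norm_eq_abs, abs_mul, abs_of_pos (hq k)]
    exact mul_le_mul_of_nonneg_right (hratio k) (hq k).le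
  have hW : HasSum (fun k : ℕ => q a₀ (k + 1) / (a + k) - q a₀ (k + 1) / (a + 1 + k))
      (S - S') := hS.sub hS'
  have ht_sum : Summable
      (fun k : ℕ => (((k : ℝ) - 1) / ((k : ℝ) + a)) * (q a₀ k - q a₀ (k + 1))) := by
    refine Summable.of_norm_bounded ((summable_diff ha₀).mul_left (1 + 1 / a))
      fun k => ?_
    rw [Real.norm_eq_abs, abs_mul, abs_of_nonneg (diff_nonneg ha₀ k)]
    exact mul_le_mul_of_nonneg_right (hratio k) (diff_nonneg ha₀ k)
  have hterm : ∀ k : ℕ, (((k : ℝ) - 1) / ((k : ℝ) + a)) * (q a₀ k - q a₀ (k + 1))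
      - (1 + a) * (q a₀ (k + 1) / (a + k) - q a₀ (k + 1) / (a + 1 + k))
      = f k - f (k + 1) := by
    intro k
    have h1 : ((k : ℝ) + a) ≠ 0 := by positivity
    have h2 : ((k : ℝ) + 1 + a) ≠ 0 := by positivity
    have h3 : (a + (k : ℝ)) ≠ 0 := by positivity
    have h4 : (a + 1 + (k : ℝ)) ≠ 0 := by positivity
    rw [hfdef]
    push_cast
    field_simp
    ring
  have hFsummable : Summable (fun k => f k - f (k + 1)) := by
    have h := ht_sum.sub ((hW.summable).mul_left (1 + a))
    exact h.congr hterm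
  have hF : HasSum (fun k => f k - f (k + 1)) (f 0) :=
    hasSum_teles f hFsummable htends
  have hT : HasSum (fun k : ℕ => (((k : ℝ) - 1) / ((k : ℝ) + a)) * (q a₀ k - q a₀ (k + 1)))
      (f 0 + (1 + a) * (S - S')) := by
    have h := hF.add (hW.mul_left (1 + a))
    refine h.congr_fun fun k => ?_
    rw [← hterm k]; ring
  have hLHS : (∑' k : ℕ, BOtail a₀ (k + 1) / (a + k)) = S := by
    rw [hSdef]
    exact tsum_congr fun k => by rw [BOtail_eq ha₀]
  have hRHS : (∑' k : ℕ, (((k : ℝ) - 1) / ((k : ℝ) + a)) * BOp a₀ (k + 1))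
      = f 0 + (1 + a) * (S - S') := by
    rw [← hT.tsum_eq]
    exact tsum_congr fun k => by rw [BOp_succ ha₀]
  rw [hLHS, hRHS]
  have hf0 : f 0 = -(1 / a) := by
    rw [hfdef]
    simp [q_zero ha₀]
    ring
  rw [hf0]
  have ha' : a ≠ 0 := ha.ne'
  have ha1 : a + 1 ≠ 0 := by positivity
  have ha₀1 : a₀ + 1 ≠ 0 := by positivity
  field_simp at hstar ⊢
  linear_combination (a + 1) * hstar
end

section
/- Let N_1^n satisfy N_1^{n+1} = (1 − a_0/((a_0+1)n + a_0)) N_1^n + (a_0+1)n/((a_0+1)n + a_0) for n ≥ 1 with N_1^1 given, where a_0 > 0. Then N_1^n / n → (a_0+1)/(2a_0+1) as n → ∞. -/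
open Filter Topology

theorem degree_one_limit (a₀ : ℝ) (ha₀ : 0 < a₀) (N : ℕ → ℝ)
    (hrec : ∀ n : ℕ, 1 ≤ n →
      N (n + 1) = (1 - a₀ / ((a₀ + 1) * n + a₀)) * N n
        + (a₀ + 1) * n / ((a₀ + 1) * n + a₀)) :
    Tendsto (fun n : ℕ => N n / n) atTop (𝓝 ((a₀ + 1) / (2 * a₀ + 1))) := by
  set L : ℝ := (a₀ + 1) / (2 * a₀ + 1) with hL
  have h2 : (0:ℝ) < 2 * a₀ + 1 := by linarith
  have hLpos : 0 < L := div_pos (by linarith) h2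
  set e : ℕ → ℝ := fun n => N n - L * n with he
  have hD : ∀ n : ℕ, (0:ℝ) < (a₀ + 1) * n + a₀ := fun n => by positivity
  have hkey : ∀ n : ℕ, 1 ≤ n →
      e (n+1) = (1 - a₀ / ((a₀ + 1) * n + a₀)) * e n
        - L * a₀ / ((a₀ + 1) * n + a₀) := by
    intro n hn
    have hDn := (hD n).ne'
    simp only [he]
    rw [hrec n hn, hL]
    push_cast
    field_simp
    ring
  set M : ℝ := max (|e 1|) L with hM
  have hLM : L ≤ M := le_max_right _ _
  have hbound : ∀ n : ℕ, 1 ≤ n → |e n| ≤ M := by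
    intro n hn
    induction n, hn using Nat.le_induction with
    | base => exact le_max_left _ _
    | succ n hn ih =>
      rw [hkey n hn]
      set D := (a₀ + 1) * (n:ℝ) + a₀ with hDdef
      have hD0 : (0:ℝ) < D := hD n
      have hq0 : 0 ≤ a₀ / D := by positivity
      have hq1 : a₀ / D ≤ 1 := by
        rw [div_le_one hD0]
        have : (0:ℝ) ≤ (a₀+1) * n := by positivity
        linarith
      calc |(1 - a₀ / D) * e n - L * a₀ / D|
          ≤ |(1 - a₀ / D) * e n| + |L * a₀ / D| := abs_sub _ _
        _ = (1 - a₀ / D) * |e n| + L * (a₀ / D) := by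
            rw [abs_mul, abs_of_nonneg (by linarith : (0:ℝ) ≤ 1 - a₀ / D),
              mul_div_assoc, abs_mul, abs_of_nonneg hLpos.le,
              abs_of_nonneg hq0]
        _ ≤ (1 - a₀ / D) * M + M * (a₀ / D) := by
            gcongr
        _ = M := by ring
  have h0 : Tendsto (fun n : ℕ => e n / n) atTop (𝓝 0) := by
    apply squeeze_zero_norm' (a := fun n : ℕ => M / n)
    · filter_upwards [eventually_ge_atTop 1] with n hn
      have hn0 : (0:ℝ) < n := by exact_mod_cast hn
      rw [Real.norm_eq_abs, abs_div, abs_of_nonneg hn0.le]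
      gcongr
      exact hbound n hn
    · exact tendsto_const_div_atTop_nhds_zero_nat M
  have hadd : Tendsto (fun n : ℕ => e n / n + L) atTop (𝓝 (0 + L)) :=
    h0.add tendsto_const_nhds
  rw [zero_add] at hadd
  refine hadd.congr' ?_
  filter_upwards [eventually_ge_atTop 1] with n hn
  have hn0 : (n:ℝ) ≠ 0 := by
    have : (0:ℝ) < n := by exact_mod_cast hn
    exact this.ne'
  simp only [he]
  field_simp
  ring
end

section
/- Deterministic recursion lemma: suppose a real sequence (x_n) satisfies x_{n+1} = (1 − b_n/(n + λ_n)) x_n + c_n where b_n → b > 0, c_n → c ∈ ℝ, λ_n is bounded, and n + λ_n > b_n > 0 for all n. Then x_n/n → c/(1+b). -/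
open Filter Topology

/-- If the increments of `|e|` are bounded by a sequence tending to `0`,
then `e n / n → 0`. -/
lemma aux_en_div_n (e d : ℕ → ℝ) (hd : Tendsto d atTop (𝓝 0))
    (h : ∀ n, |e (n + 1)| ≤ |e n| + |d n|) :
    Tendsto (fun n : ℕ => e n / n) atTop (𝓝 0) := by
  rw [Metric.tendsto_atTop]
  intro ε hε
  obtain ⟨N₁, hN₁⟩ := (Metric.tendsto_atTop.mp hd) (ε / 2) (by linarith)
  have key : ∀ k : ℕ, |e (N₁ + k)| ≤ |e N₁| + k * (ε / 2) := by
    intro k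
    induction k with
    | zero => simp
    | succ k ih =>
      have h1 := h (N₁ + k)
      have h2 : |d (N₁ + k)| ≤ ε / 2 := by
        have := hN₁ (N₁ + k) (Nat.le_add_right _ _)
        rw [Real.dist_eq, sub_zero] at this
        linarith
      have : |e (N₁ + (k + 1))| ≤ |e N₁| + k * (ε / 2) + ε / 2 := by
        have : N₁ + (k + 1) = (N₁ + k) + 1 := by ring
        rw [this]
        calc |e ((N₁ + k) + 1)| ≤ |e (N₁ + k)| + |d (N₁ + k)| := h1
          _ ≤ |e N₁| + k * (ε / 2) + ε / 2 := by linarith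
      calc |e (N₁ + (k + 1))| ≤ |e N₁| + k * (ε / 2) + ε / 2 := this
        _ = |e N₁| + (k + 1 : ℕ) * (ε / 2) := by push_cast; ring
  obtain ⟨M, hM⟩ := exists_nat_gt (2 * |e N₁| / ε)
  refine ⟨max (N₁ + 1) M, fun n hn => ?_⟩
  have hn1 : N₁ + 1 ≤ n := le_trans (le_max_left _ _) hn
  have hnM : M ≤ n := le_trans (le_max_right _ _) hn
  have hnpos : (0 : ℝ) < n := by
    have : 1 ≤ n := by omega
    exact_mod_cast Nat.lt_of_lt_of_le Nat.zero_lt_one this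
  have hbound : |e n| ≤ |e N₁| + n * (ε / 2) := by
    obtain ⟨k, hk⟩ : ∃ k, n = N₁ + k := ⟨n - N₁, by omega⟩
    subst hk
    calc |e (N₁ + k)| ≤ |e N₁| + k * (ε / 2) := key k
      _ ≤ |e N₁| + (N₁ + k : ℕ) * (ε / 2) := by
          have : (k : ℝ) ≤ (N₁ + k : ℕ) := by push_cast; linarith [Nat.cast_nonneg (α := ℝ) N₁]
          nlinarith
  have heN : |e N₁| / n < ε / 2 := by
    have hMn : 2 * |e N₁| / ε < n := lt_of_lt_of_le hM (by exact_mod_cast hnM)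
    rw [div_lt_iff₀ hε] at hMn
    rw [div_lt_iff₀ hnpos]
    nlinarith
  rw [Real.dist_eq, sub_zero, abs_div, abs_of_pos hnpos]
  calc |e n| / n ≤ (|e N₁| + n * (ε / 2)) / n := by gcongr
    _ = |e N₁| / n + ε / 2 := by field_simp
    _ < ε / 2 + ε / 2 := by linarith
    _ = ε := by ring

theorem recursion_lemma (x b c lam : ℕ → ℝ) (b₀ c₀ : ℝ)
    (hb : Tendsto b atTop (𝓝 b₀)) (hb₀ : 0 < b₀)
    (hc : Tendsto c atTop (𝓝 c₀))
    (hlam : ∃ B : ℝ, ∀ n, |lam n| ≤ B)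
    (hdom : ∀ n : ℕ, 0 < b n ∧ b n < (n : ℝ) + lam n)
    (hrec : ∀ n : ℕ, x (n + 1) = (1 - b n / ((n : ℝ) + lam n)) * x n + c n) :
    Tendsto (fun n : ℕ => x n / n) atTop (𝓝 (c₀ / (1 + b₀))) := by
  obtain ⟨B, hB⟩ := hlam
  set L : ℝ := c₀ / (1 + b₀) with hL
  have h1b : (0 : ℝ) < 1 + b₀ := by linarith
  have h1b' : (1 : ℝ) + b₀ ≠ 0 := ne_of_gt h1b
  have hden : ∀ n : ℕ, (0 : ℝ) < (n : ℝ) + lam n := fun n => lt_trans (hdom n).1 (hdom n).2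
  set e : ℕ → ℝ := fun n => x n - L * n with he
  set d : ℕ → ℝ := fun n => c n - L - L * (b n * n / ((n : ℝ) + lam n)) with hdd
  -- recursion for e
  have hrec' : ∀ n : ℕ, e (n + 1) = (1 - b n / ((n : ℝ) + lam n)) * e n + d n := by
    intro n
    have hne : ((n : ℝ) + lam n) ≠ 0 := ne_of_gt (hden n)
    simp only [he, hdd, hrec n]
    push_cast
    field_simp
    ring
  -- d tends to 0
  have hd0 : Tendsto d atTop (𝓝 0) := by
    have hfrac : Tendsto (fun n : ℕ => (n : ℝ) / ((n : ℝ) + lam n)) atTop (𝓝 1) := by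
      have hlimd : Tendsto (fun n : ℕ => ((n : ℝ) + lam n) / n) atTop (𝓝 1) := by
        have h1 : Tendsto (fun n : ℕ => lam n / n) atTop (𝓝 0) := by
          apply squeeze_zero_norm (fun n => ?_) (tendsto_const_div_atTop_nhds_zero_nat B)
          rcases Nat.eq_zero_or_pos n with h | h
          · subst h
            simp only [Nat.cast_zero, div_zero, norm_zero]
            positivity
          · have hn0 : (0 : ℝ) < n := by exact_mod_cast h
            rw [Real.norm_eq_abs, abs_div, abs_of_pos hn0]
            exact div_le_div_of_nonneg_right (hB n) (le_of_lt hn0)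
        have : Tendsto (fun n : ℕ => 1 + lam n / n) atTop (𝓝 (1 + 0)) :=
          tendsto_const_nhds.add h1
        rw [add_zero] at this
        apply this.congr'
        filter_upwards [eventually_ge_atTop 1] with n hn
        have hn0 : ((n : ℝ)) ≠ 0 := by
          have : (0:ℝ) < n := by exact_mod_cast hn
          exact ne_of_gt this
        field_simp
      have := hlimd.inv₀ (by norm_num)
      rw [inv_one] at this
      apply this.congr'
      filter_upwards [eventually_ge_atTop 1] with n hn
      rw [inv_div]
    have hbn : Tendsto (fun n : ℕ => b n * ((n : ℝ) / ((n : ℝ) + lam n))) atTop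
        (𝓝 (b₀ * 1)) := hb.mul hfrac
    have hmain : Tendsto d atTop (𝓝 (c₀ - L - L * (b₀ * 1))) := by
      apply (hc.sub tendsto_const_nhds).sub (tendsto_const_nhds.mul hbn) |>.congr
      intro n
      simp only [hdd]
      ring
    have : c₀ - L - L * (b₀ * 1) = 0 := by
      rw [hL]; field_simp; ring
    rwa [this] at hmain
  -- increment bound
  have hstep : ∀ n, |e (n + 1)| ≤ |e n| + |d n| := by
    intro n
    rw [hrec' n]
    have hβpos : 0 < b n / ((n : ℝ) + lam n) := div_pos (hdom n).1 (hden n)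
    have hβle : b n / ((n : ℝ) + lam n) ≤ 1 :=
      (div_le_one (hden n)).mpr (le_of_lt (hdom n).2)
    calc |(1 - b n / ((n : ℝ) + lam n)) * e n + d n|
        ≤ |(1 - b n / ((n : ℝ) + lam n)) * e n| + |d n| := abs_add_le _ _
      _ = |1 - b n / ((n : ℝ) + lam n)| * |e n| + |d n| := by rw [abs_mul]
      _ ≤ 1 * |e n| + |d n| := by
          have : |1 - b n / ((n : ℝ) + lam n)| ≤ 1 := by
            rw [abs_le]; constructor <;> linarith
          nlinarith [abs_nonneg (e n)]
      _ = |e n| + |d n| := by ring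
  have hediv : Tendsto (fun n : ℕ => e n / n) atTop (𝓝 0) := aux_en_div_n e d hd0 hstep
  have : Tendsto (fun n : ℕ => e n / n + L) atTop (𝓝 (0 + L)) :=
    hediv.add tendsto_const_nhds
  rw [zero_add] at this
  apply this.congr'
  filter_upwards [eventually_ge_atTop 1] with n hn
  have hn0 : ((n : ℝ)) ≠ 0 := by
    have : (0:ℝ) < n := by exact_mod_cast hn
    exact ne_of_gt this
  simp only [he]
  field_simp
  ring
end

section
/- Stationarity of the true parameter for the HPAM limiting likelihood: let K ≥ 1, π_i > 0, p_j > 0, and γ⁰ a symmetric positive K×K matrix. Define θ_{ij} := π_i γ⁰_{ij} p_j / (Σ_k γ⁰_{ik} p_k) + π_j γ⁰_{ji} p_i / (Σ_k γ⁰_{jk} p_k) for i ≠ j and θ_{ii} := π_i γ⁰_{ii} p_i / (Σ_k γ⁰_{ik} p_k). Define ℓ(γ) := Σ_{i≤j, indices symmetrized} θ_{ij} log γ_{ij} − Σ_i π_i log(Σ_j γ_{ij} p_j) on symmetric positive matrices. Then the gradient of ℓ (with respect to the independent entries γ_{ij}, i ≤ j) vanishes at γ = γ⁰. -/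
open scoped BigOperators

/-- The limiting edge fractions θ_{ij} of the HPAM. -/
noncomputable def hpamTheta (K : ℕ) (piv p : Fin K → ℝ) (γ : Fin K → Fin K → ℝ)
    (i j : Fin K) : ℝ :=
  if i = j then piv i * γ i i * p i / (∑ k, γ i k * p k)
  else piv i * γ i j * p j / (∑ k, γ i k * p k) + piv j * γ j i * p i / (∑ k, γ j k * p k)

theorem hpam_stationarity (K : ℕ) (hK : 1 ≤ K) (piv p : Fin K → ℝ)
    (hpiv : ∀ i, 0 < piv i) (hp : ∀ j, 0 < p j)
    (γ : Fin K → Fin K → ℝ) (hsym : ∀ i j, γ i j = γ j i) (hpos : ∀ i j, 0 < γ i j) :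
    (∀ i j : Fin K, i ≠ j →
      hpamTheta K piv p γ i j / γ i j
          - piv i * p j / (∑ k, γ i k * p k)
          - piv j * p i / (∑ k, γ j k * p k) = 0) ∧
    (∀ i : Fin K,
      hpamTheta K piv p γ i i / γ i i - piv i * p i / (∑ k, γ i k * p k) = 0) := by
  have hne : Nonempty (Fin K) := ⟨⟨0, hK⟩⟩
  have hS : ∀ i, (∑ k, γ i k * p k) ≠ 0 := fun i =>
    ne_of_gt (Finset.sum_pos (fun k _ => mul_pos (hpos i k) (hp k)) Finset.univ_nonempty)
  constructor
  · intro i j hij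
    have hγ : γ i j ≠ 0 := ne_of_gt (hpos i j)
    rw [hpamTheta, if_neg hij, hsym j i]
    field_simp
    ring
  · intro i
    have hγ : γ i i ≠ 0 := ne_of_gt (hpos i i)
    rw [hpamTheta, if_pos rfl, div_right_comm, mul_right_comm, mul_div_assoc _ (γ i i),
      div_self hγ, mul_one, sub_self]
end
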